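/- arXiv:2504.14393 — 5 statements merged into one kernel-verified Lean document; each statement's English description precedes it below -/
import Mathlib

section
/- In a finite lattice, an equivalence relation Θ is a lattice congruence if and only if (1) each equivalence class is an interval, (2) the map sending an element to the minimum of its equivalence class is order-preserving, and (3) the map sending an element to the maximum of its equivalence class is order-preserving. -/
/-- An equivalence relation is a lattice congruence if it is compatible
with meets and joins. -/
def IsLatCong {L : Type*} [Lattice L] (r : Setoid L) : Prop :=
  ∀ x1 x2 y1 y2 : L, r.r x1 x2 → r.r y1 y2 →
    r.r (x1 ⊓ y1) (x2 ⊓ y2) ∧ r.r (x1 ⊔ y1) (x2 ⊔ y2)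

/-- In a finite lattice, an equivalence relation `r` is a lattice congruence if and
only if there are maps `dn` (sending an element to the bottom of its class) and `up`
(sending an element to the top of its class), both order-preserving, such that each
class is the interval `[dn y, up y]`. -/
theorem stmt0 {L : Type*} [Lattice L] [Fintype L] (r : Setoid L) :
    IsLatCong r ↔
      ∃ dn up : L → L, Monotone dn ∧ Monotone up ∧
        ∀ x y : L, r.r x y ↔ (dn y ≤ x ∧ x ≤ up y) := by
  classical
  constructor
  · intro hcong
    have hne : ∀ y : L, (Finset.univ.filter (fun x => r.r x y)).Nonempty :=
      fun y => ⟨y, Finset.mem_filter.2 ⟨Finset.mem_univ y, r.refl y⟩⟩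
    set dn : L → L := fun y => (Finset.univ.filter (fun x => r.r x y)).inf' (hne y) id with hdn
    set up : L → L := fun y => (Finset.univ.filter (fun x => r.r x y)).sup' (hne y) id with hup
    have hdn_mem : ∀ y, r.r (dn y) y := by
      intro y
      refine Finset.inf'_induction (p := fun z => r.r z y) (hne y) id ?_ ?_
      · intro a ha b hb
        have := (hcong a y b y ha hb).1
        simpa using this
      · intro b hb; simpa using hb
    have hup_mem : ∀ y, r.r (up y) y := by
      intro y
      refine Finset.sup'_induction (p := fun z => r.r z y) (hne y) id ?_ ?_
      · intro a ha b hb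
        have := (hcong a y b y ha hb).2
        simpa using this
      · intro b hb; simpa using hb
    have hdn_le : ∀ x y, r.r x y → dn y ≤ x := by
      intro x y hxy
      exact Finset.inf'_le (s := Finset.univ.filter (fun z => r.r z y)) id (Finset.mem_filter.2 ⟨Finset.mem_univ x, hxy⟩)
    have hle_up : ∀ x y, r.r x y → x ≤ up y := by
      intro x y hxy
      exact Finset.le_sup' (s := Finset.univ.filter (fun z => r.r z y)) id (Finset.mem_filter.2 ⟨Finset.mem_univ x, hxy⟩)
    refine ⟨dn, up, ?_, ?_, ?_⟩
    · intro a b hab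
      have h := (hcong (dn a) a (dn b) b (hdn_mem a) (hdn_mem b)).1
      rw [inf_eq_left.2 hab] at h
      calc dn a ≤ dn a ⊓ dn b := hdn_le _ _ h
        _ ≤ dn b := inf_le_right
    · intro a b hab
      have h := (hcong (up a) a (up b) b (hup_mem a) (hup_mem b)).2
      rw [sup_eq_right.2 hab] at h
      calc up a ≤ up a ⊔ up b := le_sup_left
        _ ≤ up b := hle_up _ _ h
    · intro x y
      constructor
      · intro hxy
        exact ⟨hdn_le x y hxy, hle_up x y hxy⟩
      · rintro ⟨h1, h2⟩
        have hud : r.r (up y) (dn y) := r.trans (hup_mem y) (r.symm (hdn_mem y))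
        have h := (hcong x x (up y) (dn y) (r.refl x) hud).1
        rw [inf_eq_left.2 h2, inf_eq_right.2 h1] at h
        exact r.trans h (hdn_mem y)
  · rintro ⟨dn, up, hmdn, hmup, hiff⟩
    -- basic facts
    have hself : ∀ y : L, dn y ≤ y ∧ y ≤ up y := fun y => (hiff y y).1 (r.refl y)
    have hdn_cls : ∀ y : L, r.r (dn y) y := fun y =>
      (hiff _ _).2 ⟨le_rfl, le_trans (hself y).1 (hself y).2⟩
    have hup_cls : ∀ y : L, r.r (up y) y := fun y =>
      (hiff _ _).2 ⟨le_trans (hself y).1 (hself y).2, le_rfl⟩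
    have hdn_eq : ∀ {a b : L}, r.r a b → dn a = dn b := by
      intro a b hab
      exact le_antisymm ((hiff _ _).1 (r.trans (hdn_cls b) (r.symm hab))).1
        ((hiff _ _).1 (r.trans (hdn_cls a) hab)).1
    have hup_eq : ∀ {a b : L}, r.r a b → up a = up b := by
      intro a b hab
      exact le_antisymm ((hiff _ _).1 (r.trans (hup_cls a) hab)).2
        ((hiff _ _).1 (r.trans (hup_cls b) (r.symm hab))).2
    have hcmp_inf : ∀ {a b : L}, a ≤ b → r.r a b → ∀ y : L, r.r (a ⊓ y) (b ⊓ y) := by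
      intro a b hle hab y
      refine (hiff _ _).2 ⟨le_inf ?_ ?_, le_trans (inf_le_inf_right y hle) (hself _).2⟩
      · calc dn (b ⊓ y) ≤ dn b := hmdn inf_le_left
          _ = dn a := (hdn_eq hab).symm
          _ ≤ a := (hself a).1
      · exact le_trans (hself _).1 inf_le_right
    have hcmp_sup : ∀ {a b : L}, a ≤ b → r.r a b → ∀ y : L, r.r (a ⊔ y) (b ⊔ y) := by
      intro a b hle hab y
      refine r.symm ((hiff _ _).2 ⟨le_trans (hself _).1 (sup_le_sup_right hle y), sup_le ?_ ?_⟩)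
      · calc b ≤ up b := (hself b).2
          _ = up a := (hup_eq hab).symm
          _ ≤ up (a ⊔ y) := hmup le_sup_left
      · exact le_trans le_sup_right (hself _).2
    have hinf1 : ∀ {a b : L}, r.r a b → ∀ y : L, r.r (a ⊓ y) (b ⊓ y) := by
      intro a b hab y
      have hca : r.r (a ⊔ b) a := (hiff _ _).2 ⟨le_trans (hself a).1 le_sup_left,
        sup_le (hself a).2 (le_trans (hself b).2 (hup_eq hab).symm.le)⟩
      have hcb : r.r (a ⊔ b) b := r.trans hca hab
      exact r.trans (hcmp_inf le_sup_left (r.symm hca) y)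
        (r.symm (hcmp_inf le_sup_right (r.symm hcb) y))
    have hsup1 : ∀ {a b : L}, r.r a b → ∀ y : L, r.r (a ⊔ y) (b ⊔ y) := by
      intro a b hab y
      have hca : r.r (a ⊓ b) a := (hiff _ _).2 ⟨le_inf (hself a).1
        (le_trans (hdn_eq hab).le (hself b).1), le_trans inf_le_left (hself a).2⟩
      have hcb : r.r (a ⊓ b) b := r.trans hca hab
      exact r.trans (r.symm (hcmp_sup inf_le_left hca y)) (hcmp_sup inf_le_right hcb y)
    intro x1 x2 y1 y2 h1 h2
    constructor
    · refine r.trans (hinf1 h1 y1) ?_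
      rw [inf_comm x2 y1, inf_comm x2 y2]
      exact hinf1 h2 x2
    · refine r.trans (hsup1 h1 y1) ?_
      rw [sup_comm x2 y1, sup_comm x2 y2]
      exact hsup1 h2 x2
end

section
/- Let L be a finite join-semidistributive lattice and Θ a lattice congruence on L. Then an element x ∈ L is contracted by Θ if and only if at least one of its canonical joinands is contracted by Θ. -/
/-- `x` is the least upper bound of `X` within the subposet `S`. -/
def IsLUBIn {L : Type*} [Lattice L] (S : Set L) (X : Set L) (x : L) : Prop :=
  x ∈ S ∧ (∀ a ∈ X, a ≤ x) ∧ ∀ b ∈ S, (∀ a ∈ X, a ≤ b) → x ≤ b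

/-- `X` is the canonical join representation of `x` within the subposet `S`:
an antichain joining to `x` whose order ideal is contained in the order ideal of
any other set joining to `x`. -/
def IsCJRIn {L : Type*} [Lattice L] (S : Set L) (x : L) (X : Set L) : Prop :=
  X ⊆ S ∧ IsAntichain (· ≤ ·) X ∧ IsLUBIn S X x ∧
    ∀ Y ⊆ S, IsLUBIn S Y x → ∀ a ∈ X, ∃ b ∈ Y, a ≤ b

/-- `x` is contracted by the congruence `r` if it is congruent to a strictly
smaller element. -/
def Contracted {L : Type*} [Lattice L] (r : Setoid L) (x : L) : Prop :=
  ∃ y : L, y < x ∧ r.r x y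

/-- In a finite join-semidistributive lattice (every element has a canonical join
representation), an element `x` is contracted by a lattice congruence `r` if and
only if one of its canonical joinands is contracted by `r`. -/
theorem stmt2 {L : Type*} [Lattice L] [Fintype L] (r : Setoid L) (hr : IsLatCong r)
    (hjsd : ∀ z : L, ∃ Z : Set L, IsCJRIn Set.univ z Z)
    (x : L) (X : Set L) (hX : IsCJRIn Set.univ x X) :
    Contracted r x ↔ ∃ j ∈ X, Contracted r j := by
  classical
  obtain ⟨-, hXac, ⟨-, hXub, hXlub⟩, hXmin⟩ := hX
  constructor
  · rintro ⟨y, hylt, hxy⟩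
    have hex : ∃ j ∈ X, ¬ j ≤ y := by
      by_contra h
      push_neg at h
      exact absurd (hXlub y (Set.mem_univ y) h) hylt.not_ge
    obtain ⟨j, hjX, hjy⟩ := hex
    refine ⟨j, hjX, j ⊓ y, ?_, ?_⟩
    · exact lt_of_le_of_ne inf_le_left (fun h => hjy (by rw [← h]; exact inf_le_right))
    · have h2 := (hr j j x y (r.refl j) hxy).1
      rwa [inf_eq_left.mpr (hXub j hjX)] at h2
  · rintro ⟨j, hjX, y, hylt, hjy⟩
    set T : Set L := (X \ {j}) ∪ {y} with hT
    have hTfin : T.Finite := Set.toFinite T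
    have hTne : hTfin.toFinset.Nonempty := ⟨y, hTfin.mem_toFinset.mpr (Or.inr rfl)⟩
    set z := hTfin.toFinset.sup' hTne id with hz
    have hyT : y ∈ T := Or.inr rfl
    have hzmem : ∀ a ∈ T, a ≤ z := fun a ha =>
      Finset.le_sup' id (hTfin.mem_toFinset.mpr ha)
    have hzle : ∀ b : L, (∀ a ∈ T, a ≤ b) → z ≤ b := fun b hb =>
      Finset.sup'_le _ _ (fun a ha => hb a (hTfin.mem_toFinset.mp ha))
    have hTub : ∀ a ∈ T, a ≤ x := by
      rintro a (⟨haX, -⟩ | ha)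
      · exact hXub a haX
      · rw [Set.mem_singleton_iff] at ha
        exact ha ▸ (hylt.le.trans (hXub j hjX))
    have hzx : z ≤ x := hzle x hTub
    have hxjz : x = j ⊔ z := by
      refine le_antisymm (hXlub (j ⊔ z) (Set.mem_univ _) ?_) (sup_le (hXub j hjX) hzx)
      intro a haX
      by_cases hja : a = j
      · exact hja ▸ le_sup_left
      · exact (hzmem a (Or.inl ⟨haX, hja⟩)).trans le_sup_right
    have hyz : y ⊔ z = z := sup_eq_right.mpr (hzmem y hyT)
    have hcong : r.r x z := by
      have := (hr j y z z hjy (r.refl z)).2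
      rwa [← hxjz, hyz] at this
    have hzlt : z < x := by
      refine lt_of_le_of_ne hzx (fun hzeq => ?_)
      have hlub : IsLUBIn Set.univ T x :=
        ⟨Set.mem_univ x, hTub, fun b _ hb => hzeq ▸ hzle b hb⟩
      obtain ⟨b, hbT, hjb⟩ := hXmin T (Set.subset_univ T) hlub j hjX
      rcases hbT with ⟨hbX, hbj⟩ | hb
      · exact hXac hjX hbX (fun h => hbj (h ▸ rfl)) hjb
      · rw [Set.mem_singleton_iff] at hb
        exact absurd (hb ▸ hjb) hylt.not_ge
    exact ⟨z, hzlt, hcong⟩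
end

section
/- Let L be a finite join-semidistributive lattice and Θ a lattice congruence on L. If x ∈ L is not contracted by Θ, then the canonical join representation of x computed in the quotient L/Θ (realized as the subposet of elements not contracted by Θ) coincides with the canonical join representation of x in L. In particular, the join-irreducible elements of L/Θ are exactly the join-irreducible elements of L not contracted by Θ. -/
/-- `m` is covered by `j` within the subposet `S`. -/
def CoversIn {L : Type*} [Lattice L] (S : Set L) (m j : L) : Prop :=
  m ∈ S ∧ j ∈ S ∧ m < j ∧ ∀ z ∈ S, m < z → z < j → False

/-- `j` is join-irreducible within the subposet `S`: it covers exactly one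
element of `S`. -/
def JoinIrredIn {L : Type*} [Lattice L] (S : Set L) (j : L) : Prop :=
  j ∈ S ∧ ∃! m : L, CoversIn S m j

/-!
Each congruence class of a finite lattice has a least element `π↓ x` (`classMin`), and `π↓` is a
monotone projection onto the uncontracted elements. If `x` and all elements of `Y` are
uncontracted, any upper bound `b` of `Y` yields the uncontracted upper bound `π↓ (b ⊓ x) ≤ b`, so
`Y` joins to `x` in the quotient exactly when it does in `L`. A canonical joinand `a` of `x` is
uncontracted, since otherwise replacing it by `π↓ a < a` would give a join representation of `x`
not refining it. Finally, `j` is join-irreducible iff it has a largest strictly smaller element;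
`π↓` carries this element of `L` to the one of the quotient, and in the other direction the
canonical join representation of `j` in `L`, being also the one in the quotient, must be `{j}`.
-/

section Lattice

variable {L : Type*} [Lattice L]

theorem IsLUBIn.of_subset {S T X : Set L} {x : L} (hST : S ⊆ T) (hx : x ∈ S)
    (h : IsLUBIn T X x) : IsLUBIn S X x :=
  ⟨hx, h.2.1, fun b hb => h.2.2 b (hST hb)⟩

theorem IsLatCong.rel_sup_left {r : Setoid L} (hr : IsLatCong r) (c : L) {a b : L}
    (h : r.r a b) : r.r (c ⊔ a) (c ⊔ b) :=
  (hr c c a b (r.iseqv.refl c) h).2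

theorem IsLatCong.rel_inf {r : Setoid L} (hr : IsLatCong r) {a b c : L}
    (hb : r.r a b) (hc : r.r a c) : r.r a (b ⊓ c) := by
  simpa using (hr a b a c hb hc).1

theorem IsLatCong.rel_finset_inf' {r : Setoid L} (hr : IsLatCong r) (x : L) (s : Finset L)
    (hs : s.Nonempty) (h : ∀ y ∈ s, r.r x y) : r.r x (s.inf' hs id) := by
  induction hs using Finset.Nonempty.cons_induction with
  | singleton a => simpa using h a (Finset.mem_singleton_self a)
  | cons a t ha ht ih =>
    rw [Finset.inf'_cons ht]
    exact hr.rel_inf (h a (Finset.mem_cons_self a t))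
      (ih fun y hy => h y (Finset.mem_cons_of_mem hy))

end Lattice

section Finite

variable {L : Type*} [Lattice L] [Fintype L]

theorem exists_coversIn_of_lt {S : Set L} {m j : L} (hm : m ∈ S) (hj : j ∈ S) (h : m < j) :
    ∃ w, m ≤ w ∧ CoversIn S w j := by
  classical
  obtain ⟨w, hw, hmax⟩ := Finset.exists_maximal (s :=
    (Finset.univ.filter (fun w => w ∈ S ∧ m ≤ w ∧ w < j))) ⟨m, by simp [hm, h]⟩
  simp only [Finset.mem_filter, Finset.mem_univ, true_and] at hw
  refine ⟨w, hw.2.1, hw.1, hj, hw.2.2, fun z hz hwz hzj => ?_⟩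
  exact hwz.not_ge (hmax (by simp [hz, hw.2.1.trans hwz.le, hzj]) hwz.le)

theorem joinIrredIn_iff_exists_greatest_lt (S : Set L) (j : L) :
    JoinIrredIn S j ↔ j ∈ S ∧ ∃ m ∈ S, m < j ∧ ∀ z ∈ S, z < j → z ≤ m := by
  constructor
  · rintro ⟨hj, m, hm, hm_unique⟩
    refine ⟨hj, m, hm.1, hm.2.2.1, fun z hz hzj => ?_⟩
    obtain ⟨w, hzw, hw⟩ := exists_coversIn_of_lt hz hj hzj
    exact hzw.trans (hm_unique w hw).le
  · rintro ⟨hj, m, hm, hmj, hgreatest⟩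
    refine ⟨hj, m, ⟨hm, hj, hmj, fun z hz hmz hzj => hmz.not_ge (hgreatest z hz hzj)⟩, ?_⟩
    rintro m' ⟨hm', -, hm'j, hcover⟩
    by_contra hne
    exact hcover m hm (lt_of_le_of_ne (hgreatest m' hm' hm'j) hne) hmj

/-- If `j` were not join-irreducible, the elements strictly below `j` would join to `j`. -/
theorem joinIrredIn_univ_of_mem_isCJRIn {j m : L} {Z : Set L} (hZ : IsCJRIn Set.univ j Z)
    (hjZ : j ∈ Z) (hmj : m < j) : JoinIrredIn Set.univ j := by
  classical
  set B := Finset.univ.filter (· < j)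
  have hB : B.Nonempty := ⟨m, by simpa [B] using hmj⟩
  have mem_B {z : L} : z ∈ B ↔ z < j := by simp [B]
  refine (joinIrredIn_iff_exists_greatest_lt _ _).2 ⟨trivial, B.sup' hB id, trivial, ?_,
    fun z _ hz => Finset.le_sup' id (mem_B.2 hz)⟩
  refine lt_of_le_of_ne (Finset.sup'_le _ _ fun z hz => (mem_B.1 hz).le) fun heq => ?_
  have hlub : IsLUBIn Set.univ {z | z < j} j :=
    ⟨trivial, fun z hz => le_of_lt hz,
      fun b _ hb => heq ▸ Finset.sup'_le _ _ fun z hz => hb z (mem_B.1 hz)⟩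
  obtain ⟨b, hbj, hjb⟩ := hZ.2.2.2 _ (Set.subset_univ _) hlub j hjZ
  exact (hbj : b < j).not_ge hjb

variable (r : Setoid L)

open Classical in
noncomputable def classMin (x : L) : L :=
  (Finset.univ.filter (fun y => r.r x y)).inf'
    ⟨x, Finset.mem_filter.mpr ⟨Finset.mem_univ x, r.iseqv.refl x⟩⟩ id

theorem classMin_le_of_rel {x y : L} (h : r.r x y) : classMin r x ≤ y := by
  classical
  exact Finset.inf'_le _ (Finset.mem_filter.mpr ⟨Finset.mem_univ y, h⟩)

theorem classMin_le (x : L) : classMin r x ≤ x :=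
  classMin_le_of_rel r (r.iseqv.refl x)

variable {r}

theorem rel_classMin (hr : IsLatCong r) (x : L) : r.r x (classMin r x) := by
  classical
  exact hr.rel_finset_inf' x _ _ fun y hy => (Finset.mem_filter.mp hy).2

theorem classMin_mono (hr : IsLatCong r) {x y : L} (h : x ≤ y) :
    classMin r x ≤ classMin r y := by
  have hxy := (hr x (classMin r x) y (classMin r y) (rel_classMin hr x) (rel_classMin hr y)).1
  rw [inf_eq_left.mpr h] at hxy
  exact (classMin_le_of_rel r hxy).trans inf_le_right

theorem not_contracted_iff_classMin_eq (hr : IsLatCong r) (x : L) :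
    ¬ Contracted r x ↔ classMin r x = x := by
  refine ⟨fun h => by_contra fun hne =>
    h ⟨classMin r x, lt_of_le_of_ne (classMin_le r x) hne, rel_classMin hr x⟩, ?_⟩
  rintro hfix ⟨y, hyx, hxy⟩
  exact hyx.not_ge (hfix ▸ classMin_le_of_rel r hxy)

theorem not_contracted_classMin (hr : IsLatCong r) (x : L) : ¬ Contracted r (classMin r x) := by
  refine (not_contracted_iff_classMin_eq hr _).2 (le_antisymm (classMin_le r _) ?_)
  exact classMin_le_of_rel r (r.iseqv.trans (rel_classMin hr x) (rel_classMin hr _))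

theorem le_classMin_of_le (hr : IsLatCong r) {y x : L} (hy : ¬ Contracted r y) (h : y ≤ x) :
    y ≤ classMin r x :=
  (not_contracted_iff_classMin_eq hr y).1 hy ▸ classMin_mono hr h

theorem isLUBIn_univ_of_isLUBIn_uncontracted (hr : IsLatCong r) {Y : Set L} {x : L}
    (hY : Y ⊆ {y : L | ¬ Contracted r y}) (h : IsLUBIn {y : L | ¬ Contracted r y} Y x) :
    IsLUBIn Set.univ Y x := by
  refine ⟨trivial, h.2.1, fun b _ hb => ?_⟩
  have hx_le : x ≤ classMin r (b ⊓ x) :=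
    h.2.2 _ (not_contracted_classMin hr _) fun y hy =>
      le_classMin_of_le hr (hY hy) (le_inf (hb y hy) (h.2.1 y hy))
  exact hx_le.trans ((classMin_le r _).trans inf_le_left)

/-- An upper bound `b` of the new set satisfies `x ≤ b ⊔ a ≡ b ⊔ classMin r a = b`, and `x` is
the least element of its class. -/
theorem isLUBIn_univ_replace_classMin (hr : IsLatCong r) {x a : L} {X : Set L}
    (hx : ¬ Contracted r x) (hX : IsLUBIn Set.univ X x) (ha : a ∈ X) :
    IsLUBIn Set.univ (insert (classMin r a) (X \ {a})) x := by
  refine ⟨trivial, ?_, fun b _ hb => ?_⟩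
  · rintro c (rfl | ⟨hc, -⟩)
    · exact (classMin_le r a).trans (hX.2.1 a ha)
    · exact hX.2.1 c hc
  have hx_le : x ≤ b ⊔ a := hX.2.2 _ trivial fun c hc => by
    by_cases hca : c = a
    · exact hca ▸ le_sup_right
    · exact (hb c (Or.inr ⟨hc, hca⟩)).trans le_sup_left
  have hrel : r.r (b ⊔ a) b := by
    simpa [sup_eq_left.mpr (hb _ (Set.mem_insert _ _))] using
      hr.rel_sup_left b (rel_classMin hr a)
  exact (le_classMin_of_le hr hx hx_le).trans (classMin_le_of_rel r hrel)

theorem not_contracted_of_mem_isCJRIn (hr : IsLatCong r) {x a : L} {X : Set L}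
    (hx : ¬ Contracted r x) (hX : IsCJRIn Set.univ x X) (ha : a ∈ X) : ¬ Contracted r a := by
  intro hca
  have hlt : classMin r a < a :=
    lt_of_le_of_ne (classMin_le r a) fun h => (not_contracted_iff_classMin_eq hr a).2 h hca
  obtain ⟨b, hb, hab⟩ := hX.2.2.2 _ (Set.subset_univ _)
    (isLUBIn_univ_replace_classMin hr hx hX.2.2.1 ha) a ha
  rcases hb with rfl | ⟨hbX, hba⟩
  · exact hlt.not_ge hab
  · exact hX.2.1 ha hbX (Ne.symm hba) hab

theorem isCJRIn_uncontracted_of_isCJRIn_univ (hr : IsLatCong r) {x : L} {X : Set L}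
    (hx : ¬ Contracted r x) (hX : IsCJRIn Set.univ x X) :
    IsCJRIn {y : L | ¬ Contracted r y} x X :=
  ⟨fun _ ha => not_contracted_of_mem_isCJRIn hr hx hX ha, hX.2.1,
    hX.2.2.1.of_subset (Set.subset_univ _) hx,
    fun Y hY hYx =>
      hX.2.2.2 Y (Set.subset_univ Y) (isLUBIn_univ_of_isLUBIn_uncontracted hr hY hYx)⟩

theorem joinIrredIn_uncontracted_of_joinIrredIn_univ (hr : IsLatCong r) {j : L}
    (hj : JoinIrredIn Set.univ j) (hjc : ¬ Contracted r j) :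
    JoinIrredIn {y : L | ¬ Contracted r y} j := by
  obtain ⟨-, m, -, hmj, hgreatest⟩ := (joinIrredIn_iff_exists_greatest_lt _ _).1 hj
  refine (joinIrredIn_iff_exists_greatest_lt _ _).2 ⟨hjc, classMin r m,
    not_contracted_classMin hr m, (classMin_le r m).trans_lt hmj, fun z hz hzj => ?_⟩
  exact le_classMin_of_le hr hz (hgreatest z trivial hzj)

theorem joinIrredIn_univ_of_joinIrredIn_uncontracted (hr : IsLatCong r) {j : L} {Z : Set L}
    (hZ : IsCJRIn Set.univ j Z) (hj : JoinIrredIn {y : L | ¬ Contracted r y} j) :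
    JoinIrredIn Set.univ j := by
  obtain ⟨hjc, m, hm, hmj, hgreatest⟩ := (joinIrredIn_iff_exists_greatest_lt _ _).1 hj
  have hZS := isCJRIn_uncontracted_of_isCJRIn_univ hr hjc hZ
  have hjZ : j ∈ Z := by
    by_contra hjZ
    refine hmj.not_ge (hZS.2.2.1.2.2 m hm fun z hz => hgreatest z (hZS.1 hz) ?_)
    exact lt_of_le_of_ne (hZS.2.2.1.2.1 z hz) fun h => hjZ (h ▸ hz)
  exact joinIrredIn_univ_of_mem_isCJRIn hZ hjZ hmj

end Finite

/-- In a finite join-semidistributive lattice, if `x` is not contracted by a congruence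
`r`, then the canonical join representation of `x` computed in the quotient (realized as
the subposet of uncontracted elements) coincides with its canonical join representation
in `L`; moreover the join-irreducible elements of the quotient are exactly the
join-irreducible elements of `L` not contracted by `r`. -/
theorem stmt3 {L : Type*} [Lattice L] [Fintype L] (r : Setoid L) (hr : IsLatCong r)
    (hjsd : ∀ z : L, ∃ Z : Set L, IsCJRIn Set.univ z Z)
    (x : L) (hx : ¬ Contracted r x) (X : Set L) (hX : IsCJRIn Set.univ x X) :
    IsCJRIn {y : L | ¬ Contracted r y} x X ∧
      ∀ j : L, JoinIrredIn {y : L | ¬ Contracted r y} j ↔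
        (JoinIrredIn Set.univ j ∧ ¬ Contracted r j) := by
  refine ⟨isCJRIn_uncontracted_of_isCJRIn_univ hr hx hX, fun j => ⟨fun hj => ?_,
    fun ⟨hjL, hjc⟩ => joinIrredIn_uncontracted_of_joinIrredIn_univ hr hjL hjc⟩⟩
  obtain ⟨Z, hZ⟩ := hjsd j
  exact ⟨joinIrredIn_univ_of_joinIrredIn_uncontracted hr hZ hj, hj.1⟩
end

section
/- The map δ sending a permutation π ∈ S_n to the arc diagram whose arcs correspond to descents of π (for each descent π_i > π_{i+1}, an arc connecting π_i to π_{i+1} passing right of each value π_j with π_{i+1} < π_j < π_i and j < i, and left of each such value with j > i) is a bijection from S_n to the set of noncrossing arc diagrams on n points. -/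
/-- A (combinatorial, type-A) arc on the points of `Fin n`: endpoints `p < q`
together with the set `R` of interior points passed on the right. -/
structure Arc (n : ℕ) where
  p : Fin n
  q : Fin n
  R : Finset (Fin n)
  hpq : p < q
  hR : ∀ i ∈ R, p < i ∧ i < q

namespace Arc

variable {n : ℕ}

/-- The side of the arc `α` at a point `i` of its closed interval:
`0` at endpoints, `1` if `i` is right of `α`, `-1` if left. -/
def sgn (α : Arc n) (i : Fin n) : ℤ :=
  if i = α.p ∨ i = α.q then 0 else if i ∈ α.R then 1 else -1

/-- Two arcs cross if their relative horizontal order flips somewhere on the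
intersection of their closed intervals of points. -/
def Crosses (α β : Arc n) : Prop :=
  ∃ i j : Fin n, max α.p β.p ≤ i ∧ i < j ∧ j ≤ min α.q β.q ∧
    (sgn α i - sgn β i) * (sgn α j - sgn β j) < 0

/-- Two arcs are compatible if they do not share an upper endpoint, do not share
a lower endpoint, and do not cross. -/
def Compatible (α β : Arc n) : Prop :=
  α.p ≠ β.p ∧ α.q ≠ β.q ∧ ¬ Crosses α β

end Arc

/-- A noncrossing arc diagram: a set of pairwise compatible arcs. -/
def IsNCAD {n : ℕ} (D : Set (Arc n)) : Prop :=
  ∀ α ∈ D, ∀ β ∈ D, α ≠ β → Arc.Compatible α β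

/-- The arc diagram `δ(π)` of a permutation `π`: one arc per descent, with
lower endpoint `π (i+1)`, upper endpoint `π i`, passing right of exactly the
intermediate values occurring after position `i`. -/
def diagram {n : ℕ} (π : Equiv.Perm (Fin n)) : Set (Arc n) :=
  {α | ∃ (i : Fin n) (h : (i : ℕ) + 1 < n),
     π ⟨(i : ℕ) + 1, h⟩ < π i ∧ α.p = π ⟨(i : ℕ) + 1, h⟩ ∧ α.q = π i ∧
     ∀ x : Fin n, x ∈ α.R ↔ ∃ j : Fin n, i < j ∧ π j = x ∧ α.p < x ∧ x < α.q}

/-!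
For descents `i < k` of `π`, at every point of the common interval the arc of the later descent
lies weakly to the right of the arc of the earlier one: the side of a point depends only on
whether its position is before, at, or after the descent. Hence `δ(π)` is noncrossing.

For the converse, `π 0` is the least point that is neither a lower endpoint nor to the right of
an arc of `δ(π)`. Deleting it turns `δ(π)` into `δ` of the remaining permutation, up to the arc of
a possible descent at position `0`, which runs from the next value up to `π 0` with every point
in between on its right. This gives injectivity by induction on `n`. For surjectivity, start a
permutation with the least such point `x₀` of a noncrossing diagram `D` and recurse on the arcs
not ending at `x₀`; noncrossing forces the arc ending at `x₀`, if any, to have exactly the shape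
above.
-/

open Equiv Finset

namespace Arc

variable {n : ℕ}

theorem ext {α β : Arc n} (hp : α.p = β.p) (hq : α.q = β.q) (hR : α.R = β.R) : α = β := by
  cases α; cases β; simp_all

@[simp] theorem sgn_p (α : Arc n) : α.sgn α.p = 0 := by simp [sgn]

@[simp] theorem sgn_q (α : Arc n) : α.sgn α.q = 0 := by simp [sgn]

theorem sgn_of_mem_R {α : Arc n} {x : Fin n} (hx : x ∈ α.R) : α.sgn x = 1 := by
  obtain ⟨hp, hq⟩ := α.hR x hx
  simp [sgn, hp.ne', hq.ne, hx]

theorem sgn_of_notMem_R {α : Arc n} {x : Fin n} (hp : x ≠ α.p) (hq : x ≠ α.q) (hx : x ∉ α.R) :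
    α.sgn x = -1 := by
  simp [sgn, hp, hq, hx]

theorem crosses_comm {α β : Arc n} : α.Crosses β ↔ β.Crosses α := by
  unfold Crosses
  simp only [max_comm α.p, min_comm α.q]
  refine exists₂_congr fun i j => and_congr_right' <| and_congr_right' <| and_congr_right' ?_
  constructor <;> intro h <;> linarith

theorem compatible_comm {α β : Arc n} : α.Compatible β ↔ β.Compatible α := by
  simp only [Compatible, ne_comm, crosses_comm]

theorem not_crosses_of_sgn_le {α β : Arc n}
    (h : ∀ x, max α.p β.p ≤ x → x ≤ min α.q β.q → β.sgn x ≤ α.sgn x) : ¬ α.Crosses β := by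
  rintro ⟨i, j, hi, hij, hj, hneg⟩
  have := h i hi (hij.le.trans hj)
  have := h j (hi.trans hij.le) hj
  nlinarith

theorem crosses_of_sgn_lt {α β : Arc n} {i j : Fin n} (hi : max α.p β.p ≤ i) (hij : i < j)
    (hj : j ≤ min α.q β.q) (hlt : α.sgn i < β.sgn i) (hgt : β.sgn j < α.sgn j) :
    α.Crosses β :=
  ⟨i, j, hi, hij, hj, mul_neg_of_neg_of_pos (by linarith) (by linarith)⟩

theorem q_lt_q_and_notMem_R_of_sgn_lt {α β : Arc n} (hc : ¬ α.Crosses β) (hqR : α.q ∉ β.R)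
    (hq : α.q ≠ β.q) {y : Fin n} (hy : max α.p β.p ≤ y) (hyα : y < α.q) (hyβ : y < β.q)
    (hsgn : α.sgn y < β.sgn y) : β.q < α.q ∧ β.q ∉ α.R := by
  rcases hq.lt_or_gt with hlt | hgt
  · refine absurd (crosses_of_sgn_lt hy hyα (le_min le_rfl hlt.le) hsgn ?_) hc
    have hpq : α.q ≠ β.p := ((le_of_max_le_right hy).trans_lt hyα).ne'
    rw [sgn_q, sgn_of_notMem_R hpq hlt.ne hqR]
    norm_num
  · refine ⟨hgt, fun hR => hc (crosses_of_sgn_lt hy hyβ (le_min hgt.le le_rfl) hsgn ?_)⟩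
    rw [sgn_q, sgn_of_mem_R hR]
    norm_num

end Arc

section Descents

variable {n m : ℕ}

def descentArc (π : Perm (Fin n)) (i k : Fin n) (hd : π k < π i) : Arc n where
  p := π k
  q := π i
  R := (Ioo (π k) (π i)).filter (fun x => i < π.symm x)
  hpq := hd
  hR _ hx := mem_Ioo.1 (mem_filter.1 hx).1

theorem mem_descentArc_R {π : Perm (Fin n)} {i k : Fin n} {hd : π k < π i} {x : Fin n} :
    x ∈ (descentArc π i k hd).R ↔ π k < x ∧ x < π i ∧ i < π.symm x := by
  simp [descentArc, and_assoc]

theorem mem_diagram_iff {π : Perm (Fin (m + 1))} {α : Arc (m + 1)} :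
    α ∈ diagram π ↔ ∃ (i : Fin m) (hd : π i.succ < π i.castSucc),
      α = descentArc π i.castSucc i.succ hd := by
  constructor
  · rintro ⟨i, h, hd, hp, hq, hR⟩
    obtain ⟨i, rfl⟩ : ∃ j : Fin m, j.castSucc = i := ⟨⟨i, by omega⟩, rfl⟩
    change π i.succ < _ at hd
    change α.p = π i.succ at hp
    refine ⟨i, hd, Arc.ext hp hq (Finset.ext fun x => ?_)⟩
    rw [hR, mem_descentArc_R, hp, hq]
    simp only [← eq_symm_apply]
    aesop
  · rintro ⟨i, hd, rfl⟩
    refine ⟨i.castSucc, by simp, hd, rfl, rfl, fun x => ?_⟩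
    simp only [mem_descentArc_R, ← eq_symm_apply]
    aesop

def descentSide (i j : ℕ) : ℤ := if j < i then -1 else if j ≤ i + 1 then 0 else 1

theorem descentSide_anti {i k : ℕ} (hik : i ≤ k) (j : ℕ) : descentSide k j ≤ descentSide i j := by
  unfold descentSide; split_ifs <;> omega

theorem sgn_descentArc {π : Perm (Fin (m + 1))} {i : Fin m} {hd : π i.succ < π i.castSucc}
    {x : Fin (m + 1)} (hpx : π i.succ ≤ x) (hxq : x ≤ π i.castSucc) :
    (descentArc π i.castSucc i.succ hd).sgn x = descentSide i (π.symm x) := by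
  obtain ⟨j, rfl⟩ := π.surjective x
  simp only [Arc.sgn, descentArc, mem_filter, mem_Ioo, symm_apply_apply, descentSide,
    EmbeddingLike.apply_eq_iff_eq]
  by_cases hj : j = i.succ ∨ j = i.castSucc
  · rcases hj with rfl | rfl <;> simp
  · have hpj : π i.succ < π j := hpx.lt_of_ne (π.injective.ne (by tauto))
    have hjq : π j < π i.castSucc := hxq.lt_of_ne (π.injective.ne (by tauto))
    rw [if_neg hj]
    simp only [hpj, hjq, true_and, Fin.ext_iff, Fin.val_succ, Fin.val_castSucc, Fin.lt_def] at hj ⊢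
    split_ifs <;> omega

theorem compatible_descentArc {π : Perm (Fin (m + 1))} {i k : Fin m} (hik : i < k)
    (hdi : π i.succ < π i.castSucc) (hdk : π k.succ < π k.castSucc) :
    (descentArc π i.castSucc i.succ hdi).Compatible (descentArc π k.castSucc k.succ hdk) := by
  refine ⟨π.injective.ne (Fin.succ_injective _ |>.ne hik.ne),
    π.injective.ne (Fin.castSucc_injective _ |>.ne hik.ne),
    Arc.not_crosses_of_sgn_le fun x hpx hxq => ?_⟩
  rw [sgn_descentArc (le_of_max_le_left hpx) (le_of_le_min_left hxq),
    sgn_descentArc (le_of_max_le_right hpx) (le_of_le_min_right hxq)]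
  exact descentSide_anti (Fin.le_def.1 hik.le) _

theorem isNCAD_diagram (π : Perm (Fin n)) : IsNCAD (diagram π) := by
  intro α hα β hβ hne
  cases n with
  | zero => exact α.p.elim0
  | succ m =>
    obtain ⟨i, hdi, rfl⟩ := mem_diagram_iff.1 hα
    obtain ⟨k, hdk, rfl⟩ := mem_diagram_iff.1 hβ
    rcases lt_trichotomy i k with hik | rfl | hki
    · exact compatible_descentArc hik hdi hdk
    · exact absurd rfl hne
    · exact Arc.compatible_comm.1 (compatible_descentArc hki hdk hdi)

theorem descentArc_zero_R (σ : Perm (Fin (n + 1))) (k : Fin (n + 1)) (hd : σ k < σ 0) :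
    (descentArc σ 0 k hd).R = Ioo (σ k) (σ 0) := by
  ext x
  rw [mem_descentArc_R, mem_Ioo]
  refine ⟨fun h => ⟨h.1, h.2.1⟩, fun ⟨hkx, hx0⟩ => ⟨hkx, hx0, ?_⟩⟩
  rw [Fin.pos_iff_ne_zero, Ne, symm_apply_eq]
  exact hx0.ne

end Descents

theorem exists_descent_across {α : Type*} [LinearOrder α] {m : ℕ} (f : Fin (m + 1) → α) {y : α}
    (h0 : y < f 0) (b : Fin (m + 1)) (hb : f b ≤ y) :
    ∃ j : Fin m, j.succ ≤ b ∧ y < f j.castSucc ∧ f j.succ ≤ y := by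
  induction b using Fin.induction with
  | zero => exact absurd h0 hb.not_gt
  | succ k ih =>
    by_cases hk : y < f k.castSucc
    · exact ⟨k, le_rfl, hk, hb⟩
    · obtain ⟨j, hj, hjy⟩ := ih (not_lt.1 hk)
      exact ⟨j, hj.trans Fin.castSucc_lt_succ.le, hjy⟩

def firstCandidates {n : ℕ} (D : Set (Arc n)) : Set (Fin n) := {x | ∀ α ∈ D, x ≠ α.p ∧ x ∉ α.R}

theorem isLeast_firstCandidates_diagram {m : ℕ} (π : Perm (Fin (m + 1))) :
    IsLeast (firstCandidates (diagram π)) (π 0) := by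
  refine ⟨fun α hα => ?_, fun y hy => ?_⟩
  · obtain ⟨i, hd, rfl⟩ := mem_diagram_iff.1 hα
    refine ⟨π.injective.ne (Fin.succ_ne_zero i).symm, fun h => ?_⟩
    simp [mem_descentArc_R] at h
  · by_contra! hy0
    obtain ⟨j, hjb, hyj, hjy⟩ := exists_descent_across π hy0 (π.symm y) (by simp)
    obtain ⟨hp, hR⟩ := hy _ (mem_diagram_iff.2 ⟨j, hjy.trans_lt hyj, rfl⟩)
    rcases hjy.lt_or_eq with hlt | heq
    · exact hR (mem_descentArc_R.2 ⟨hlt, hyj, Fin.castSucc_lt_succ.trans_le hjb⟩)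
    · exact hp heq.symm

namespace Arc

variable {m : ℕ}

/-- The arc `γ` redrawn after inserting a new point `x₀` to its left. -/
def lift (x₀ : Fin (m + 1)) (γ : Arc m) : Arc (m + 1) where
  p := x₀.succAbove γ.p
  q := x₀.succAbove γ.q
  R := γ.R.map x₀.succAboveEmb
  hpq := Fin.succAbove_lt_succAbove_iff.2 γ.hpq
  hR := by
    simpa [Fin.succAbove_lt_succAbove_iff] using γ.hR

variable {x₀ : Fin (m + 1)} {γ γ₁ γ₂ : Arc m}

@[simp] theorem lift_p : (lift x₀ γ).p = x₀.succAbove γ.p := rfl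

@[simp] theorem lift_q : (lift x₀ γ).q = x₀.succAbove γ.q := rfl

@[simp] theorem succAbove_mem_lift_R {z : Fin m} :
    x₀.succAbove z ∈ (lift x₀ γ).R ↔ z ∈ γ.R := by
  simp [lift]

@[simp] theorem self_notMem_lift_R : x₀ ∉ (lift x₀ γ).R := by
  simp [lift, Fin.succAbove_ne]

theorem lift_injective (x₀ : Fin (m + 1)) : Function.Injective (lift x₀) := fun _ _ h =>
  Arc.ext (Fin.succAbove_right_injective congr(($h).p))
    (Fin.succAbove_right_injective congr(($h).q)) (map_injective _ congr(($h).R))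

@[simp] theorem sgn_lift (z : Fin m) : (lift x₀ γ).sgn (x₀.succAbove z) = γ.sgn z := by
  simp [sgn]

theorem Crosses.lift (h : γ₁.Crosses γ₂) : (lift x₀ γ₁).Crosses (lift x₀ γ₂) := by
  obtain ⟨i, j, hi, hij, hj, hneg⟩ := h
  refine ⟨x₀.succAbove i, x₀.succAbove j, ?_, Fin.succAbove_lt_succAbove_iff.2 hij, ?_, by simpa⟩
  · simpa [Fin.succAbove_le_succAbove_iff] using hi
  · simpa [Fin.succAbove_le_succAbove_iff] using hj

theorem Compatible.of_lift (h : (lift x₀ γ₁).Compatible (lift x₀ γ₂)) : γ₁.Compatible γ₂ :=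
  ⟨fun e => h.1 congr(x₀.succAbove $e), fun e => h.2.1 congr(x₀.succAbove $e),
    fun hc => h.2.2 hc.lift⟩

theorem exists_lift_eq {β : Arc (m + 1)} (hp : β.p ≠ x₀) (hq : β.q ≠ x₀) (hR : x₀ ∉ β.R) :
    ∃ γ, lift x₀ γ = β := by
  obtain ⟨p, hp⟩ := Fin.exists_succAbove_eq hp
  obtain ⟨q, hq⟩ := Fin.exists_succAbove_eq hq
  obtain ⟨R, -, hRβ⟩ : ∃ R ⊆ univ, β.R = R.map x₀.succAboveEmb := subset_map_iff.1 fun x hx => by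
    obtain ⟨z, rfl⟩ := Fin.exists_succAbove_eq (ne_of_mem_of_not_mem hx hR)
    exact mem_map_of_mem _ (mem_univ z)
  refine ⟨⟨p, q, R, ?_, fun z hz => ?_⟩, Arc.ext hp hq hRβ.symm⟩
  · rw [← Fin.succAbove_lt_succAbove_iff (p := x₀), hp, hq]
    exact β.hpq
  · have := β.hR (x₀.succAbove z) (hRβ ▸ mem_map_of_mem _ hz)
    rwa [← hp, ← hq, Fin.succAbove_lt_succAbove_iff, Fin.succAbove_lt_succAbove_iff] at this

end Arc

theorem IsNCAD.preimage_lift {m : ℕ} {D : Set (Arc (m + 1))} (hD : IsNCAD D) (x₀ : Fin (m + 1)) :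
    IsNCAD (Arc.lift x₀ ⁻¹' D) := fun _ h₁ _ h₂ hne =>
  (hD _ h₁ _ h₂ ((Arc.lift_injective x₀).ne hne)).of_lift

section ConsPerm

variable {m : ℕ}

/-- The permutation with first value `x₀`, followed by the values of `π` moved to the points
other than `x₀` in an order-preserving way. -/
def consPerm (x₀ : Fin (m + 1)) (π : Perm (Fin m)) : Perm (Fin (m + 1)) :=
  ((finSuccEquiv m).trans π.optionCongr).trans (finSuccEquiv' x₀).symm

variable (x₀ : Fin (m + 1)) (π : Perm (Fin m))

@[simp] theorem consPerm_zero : consPerm x₀ π 0 = x₀ := by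
  simp [consPerm]

@[simp] theorem consPerm_succ (j : Fin m) : consPerm x₀ π j.succ = x₀.succAbove (π j) := by
  simp [consPerm, finSuccEquiv'_symm_some]

@[simp] theorem consPerm_symm_self : (consPerm x₀ π).symm x₀ = 0 := by
  rw [symm_apply_eq, consPerm_zero]

@[simp] theorem consPerm_symm_succAbove (z : Fin m) :
    (consPerm x₀ π).symm (x₀.succAbove z) = (π.symm z).succ := by
  rw [symm_apply_eq, consPerm_succ, apply_symm_apply]

theorem exists_consPerm_eq (σ : Perm (Fin (m + 1))) : ∃ x₀ π, consPerm x₀ π = σ := by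
  set e : Perm (Option (Fin m)) := ((finSuccEquiv m).symm.trans σ).trans (finSuccEquiv' (σ 0))
  have he : e none = none := by simp [e, finSuccEquiv'_at]
  have hopt : (removeNone e).optionCongr = e := by
    rw [map_equiv_removeNone, he, swap_self, ← Perm.one_def, one_mul]
  refine ⟨σ 0, removeNone e, Equiv.ext fun x => ?_⟩
  simp [consPerm, hopt, e]

theorem descentArc_consPerm_succ {i k : Fin m} (hd : π k < π i)
    (hd' : consPerm x₀ π k.succ < consPerm x₀ π i.succ) :
    descentArc (consPerm x₀ π) i.succ k.succ hd' = (descentArc π i k hd).lift x₀ := by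
  refine Arc.ext (consPerm_succ ..) (consPerm_succ ..) (Finset.ext fun x => ?_)
  by_cases hx : x = x₀
  · simp [hx, mem_descentArc_R]
  · obtain ⟨z, rfl⟩ := Fin.exists_succAbove_eq hx
    simp [mem_descentArc_R, Fin.succAbove_lt_succAbove_iff]

end ConsPerm

theorem mem_diagram_consPerm {m : ℕ} (x₀ : Fin (m + 2)) (π : Perm (Fin (m + 1))) (β : Arc (m + 2)) :
    β ∈ diagram (consPerm x₀ π) ↔ β ∈ Arc.lift x₀ '' diagram π ∨
      (β.q = x₀ ∧ β.p = x₀.succAbove (π 0) ∧ β.R = Ioo β.p β.q) := by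
  rw [mem_diagram_iff]
  constructor
  · rintro ⟨i, hd, rfl⟩
    cases i using Fin.cases with
    | zero => exact Or.inr ⟨consPerm_zero .., consPerm_succ .., descentArc_zero_R ..⟩
    | succ j =>
      have hdπ : π j.succ < π j.castSucc := by
        simpa [← Fin.succ_castSucc, Fin.succAbove_lt_succAbove_iff] using hd
      exact Or.inl ⟨_, mem_diagram_iff.2 ⟨j, hdπ, rfl⟩, (descentArc_consPerm_succ x₀ π hdπ hd).symm⟩
  · rintro (⟨γ, hγ, rfl⟩ | ⟨hq, hp, hR⟩)
    · obtain ⟨j, hd, rfl⟩ := mem_diagram_iff.1 hγ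
      have hd' : consPerm x₀ π j.succ.succ < consPerm x₀ π j.castSucc.succ := by
        simpa [Fin.succAbove_lt_succAbove_iff] using hd
      exact ⟨j.succ, hd', (descentArc_consPerm_succ x₀ π hd hd').symm⟩
    · have hd : consPerm x₀ π (0 : Fin (m + 1)).succ < consPerm x₀ π 0 := by
        rw [consPerm_succ, consPerm_zero, ← hp, ← hq]
        exact β.hpq
      refine ⟨0, hd, Arc.ext (hp.trans (consPerm_succ ..).symm)
        (hq.trans (consPerm_zero ..).symm) ?_⟩
      simp only [hR, hp, hq, Fin.castSucc_zero, descentArc_zero_R, consPerm_zero, consPerm_succ]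

theorem preimage_lift_diagram_consPerm {m : ℕ} (x₀ : Fin (m + 2)) (π : Perm (Fin (m + 1))) :
    Arc.lift x₀ ⁻¹' diagram (consPerm x₀ π) = diagram π := by
  ext γ
  simp [mem_diagram_consPerm, (Arc.lift_injective x₀).mem_set_image, Fin.succAbove_ne]

theorem diagram_injective : ∀ {n : ℕ}, Function.Injective (diagram : Perm (Fin n) → Set (Arc n))
  | 0, π, σ, _ | 1, π, σ, _ => Subsingleton.elim π σ
  | m + 2, π, σ, h => by
    obtain ⟨x, π', rfl⟩ := exists_consPerm_eq π
    obtain ⟨y, σ', rfl⟩ := exists_consPerm_eq σ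
    obtain rfl : x = y := by
      have := (isLeast_firstCandidates_diagram (consPerm x π')).unique
        (h ▸ isLeast_firstCandidates_diagram (consPerm y σ'))
      rwa [consPerm_zero, consPerm_zero] at this
    have h' := congrArg (Arc.lift x ⁻¹' ·) h
    simp only [preimage_lift_diagram_consPerm] at h'
    rw [diagram_injective h']

section LeastCandidate

variable {n : ℕ} {D : Set (Arc n)} {x₀ : Fin n} {α β : Arc n}

/-- The largest gap `y` of `α` is not a candidate; the arc witnessing this must end inside `α`,
at a gap above `y`. -/
theorem R_eq_Ioo_of_isLeast (hD : IsNCAD D) (hx₀ : IsLeast (firstCandidates D) x₀) (hα : α ∈ D)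
    (hq : α.q = x₀) : α.R = Ioo α.p α.q := by
  refine Subset.antisymm (fun x hx => mem_Ioo.2 (α.hR x hx)) fun x hx => ?_
  by_contra hxR
  set gaps := Ioo α.p α.q \ α.R
  have hne : gaps.Nonempty := ⟨x, mem_sdiff.2 ⟨hx, hxR⟩⟩
  obtain ⟨y, hy, hymax⟩ : ∃ y ∈ gaps, ∀ z ∈ gaps, z ≤ y :=
    ⟨_, gaps.max'_mem hne, fun z hz => gaps.le_max' z hz⟩
  obtain ⟨⟨hpy, hyq⟩, hyR⟩ : (α.p < y ∧ y < α.q) ∧ y ∉ α.R := by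
    simpa [gaps] using hy
  obtain ⟨β, hβ, hyβ⟩ : ∃ β ∈ D, y = β.p ∨ y ∈ β.R := by
    by_contra! h
    exact (hx₀.2 h).not_gt (hq ▸ hyq)
  have hβ' : β.p ≤ y ∧ y < β.q ∧ 0 ≤ β.sgn y := by
    rcases hyβ with rfl | hR
    · exact ⟨le_rfl, β.hpq, (Arc.sgn_p β).ge⟩
    · exact ⟨(β.hR y hR).1.le, (β.hR y hR).2, (Arc.sgn_of_mem_R hR).ge.trans' zero_le_one⟩
  have hβα : β ≠ α := by
    rintro rfl
    rcases hyβ with h | h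
    · exact hpy.ne' h
    · exact hyR h
  obtain ⟨-, hqne, hc⟩ := hD α hα β hβ hβα.symm
  obtain ⟨hβq, hβR⟩ := Arc.q_lt_q_and_notMem_R_of_sgn_lt hc (by rw [hq]; exact (hx₀.1 β hβ).2)
    hqne (max_le hpy.le hβ'.1) hyq hβ'.2.1
    (by rw [Arc.sgn_of_notMem_R hpy.ne' hyq.ne hyR]; linarith [hβ'.2.2])
  exact (hymax β.q (mem_sdiff.2 ⟨mem_Ioo.2 ⟨hpy.trans hβ'.2.1, hβq⟩, hβR⟩)).not_gt hβ'.2.1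

theorem p_notMem_R_of_isLeast (hD : IsNCAD D) (hx₀ : IsLeast (firstCandidates D) x₀)
    (hα : α ∈ D) (hq : α.q = x₀) (hβ : β ∈ D) (hβα : β ≠ α) : α.p ∉ β.R := by
  intro hR
  obtain ⟨hpβ, hpq⟩ := β.hR _ hR
  obtain ⟨-, hqne, hc⟩ := hD α hα β hβ hβα.symm
  obtain ⟨hβq, hβR⟩ := Arc.q_lt_q_and_notMem_R_of_sgn_lt hc (by rw [hq]; exact (hx₀.1 β hβ).2)
    hqne (max_le le_rfl hpβ.le) α.hpq hpq (by rw [Arc.sgn_p, Arc.sgn_of_mem_R hR]; norm_num)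
  rw [R_eq_Ioo_of_isLeast hD hx₀ hα hq] at hβR
  exact hβR (mem_Ioo.2 ⟨hpq, hβq⟩)

end LeastCandidate

section Reconstruction

variable {m : ℕ} {D : Set (Arc (m + 2))} {x₀ : Fin (m + 2)} {π : Perm (Fin (m + 1))}
  {α β : Arc (m + 2)}

theorem succAbove_mem_firstCandidates (hx₀ : IsLeast (firstCandidates D) x₀)
    (hπ : diagram π = Arc.lift x₀ ⁻¹' D) (hβ : β ∈ D) (hq : β.q ≠ x₀) :
    x₀.succAbove (π 0) ≠ β.p ∧ x₀.succAbove (π 0) ∉ β.R := by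
  obtain ⟨γ, rfl⟩ := Arc.exists_lift_eq (hx₀.1 β hβ).1.symm hq (hx₀.1 β hβ).2
  obtain ⟨hp, hR⟩ := (isLeast_firstCandidates_diagram π).1 γ (by rw [hπ]; exact hβ)
  simpa using And.intro hp hR

/-- The preimage `p` of `α.p` is a candidate of `diagram π`, and a first value of `π` below `p`
would give a candidate of `D` below `x₀`. -/
theorem p_eq_of_isLeast (hD : IsNCAD D) (hx₀ : IsLeast (firstCandidates D) x₀)
    (hπ : diagram π = Arc.lift x₀ ⁻¹' D) (hα : α ∈ D) (hq : α.q = x₀) :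
    α.p = x₀.succAbove (π 0) := by
  obtain ⟨p, hp⟩ := Fin.exists_succAbove_eq (hq ▸ α.hpq.ne : α.p ≠ x₀)
  have hpc : p ∈ firstCandidates (diagram π) := by
    rw [hπ]
    intro γ hγ
    have hne : Arc.lift x₀ γ ≠ α := fun h => Fin.succAbove_ne x₀ γ.q (congr(($h).q).trans hq)
    refine ⟨fun h => (hD α hα _ hγ hne.symm).1 ?_,
      fun h => p_notMem_R_of_isLeast hD hx₀ hα hq hγ hne ?_⟩
    · rw [← hp, h, Arc.lift_p]
    · rwa [← hp, Arc.succAbove_mem_lift_R]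
  rcases ((isLeast_firstCandidates_diagram π).2 hpc).lt_or_eq with hlt | heq
  · have hlt' : x₀.succAbove (π 0) < α.p := hp ▸ Fin.succAbove_lt_succAbove_iff.2 hlt
    refine absurd (hx₀.2 fun β hβ => ?_) (hlt'.trans (hq ▸ α.hpq)).not_ge
    by_cases hβq : β.q = x₀
    · obtain rfl : β = α := by
        by_contra hne
        exact (hD β hβ α hα hne).2.1 (hβq.trans hq.symm)
      exact ⟨hlt'.ne, fun h => (β.hR _ h).1.not_gt hlt'⟩
    · exact succAbove_mem_firstCandidates hx₀ hπ hβ hβq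
  · rw [← hp, heq]

theorem exists_q_eq_of_isLeast (hx₀ : IsLeast (firstCandidates D) x₀)
    (hπ : diagram π = Arc.lift x₀ ⁻¹' D) (hlt : x₀.succAbove (π 0) < x₀) : ∃ α ∈ D, α.q = x₀ := by
  by_contra! h
  exact (hx₀.2 fun β hβ => succAbove_mem_firstCandidates hx₀ hπ hβ (h β hβ)).not_gt hlt

theorem diagram_consPerm_of_isLeast (hD : IsNCAD D) (hx₀ : IsLeast (firstCandidates D) x₀)
    (hπ : diagram π = Arc.lift x₀ ⁻¹' D) : diagram (consPerm x₀ π) = D := by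
  ext β
  rw [mem_diagram_consPerm, hπ, Set.image_preimage_eq_inter_range]
  constructor
  · rintro (⟨hβ, -⟩ | ⟨hq, hp, hR⟩)
    · exact hβ
    · obtain ⟨α, hα, hαq⟩ := exists_q_eq_of_isLeast hx₀ hπ (hp ▸ hq ▸ β.hpq)
      have hαp := p_eq_of_isLeast hD hx₀ hπ hα hαq
      have hαR := R_eq_Ioo_of_isLeast hD hx₀ hα hαq
      obtain rfl : β = α := Arc.ext (hp.trans hαp.symm) (hq.trans hαq.symm)
        (by rw [hR, hαR, hp, hq, hαp, hαq])
      exact hα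
  · intro hβ
    by_cases hq : β.q = x₀
    · exact Or.inr ⟨hq, p_eq_of_isLeast hD hx₀ hπ hβ hq, R_eq_Ioo_of_isLeast hD hx₀ hβ hq⟩
    · exact Or.inl ⟨hβ, Arc.exists_lift_eq (hx₀.1 β hβ).1.symm hq (hx₀.1 β hβ).2⟩

end Reconstruction

theorem exists_diagram_eq :
    ∀ {n : ℕ} {D : Set (Arc n)}, IsNCAD D → ∃ π : Perm (Fin n), diagram π = D
  | 0, _, _ | 1, _, _ => ⟨1, Set.ext fun α => absurd α.hpq (by omega)⟩
  | m + 2, D, hD => by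
    have hlast : Fin.last (m + 1) ∈ firstCandidates D := fun α _ =>
      ⟨(α.hpq.trans_le (Fin.le_last _)).ne', fun h => (α.hR _ h).2.not_ge (Fin.le_last _)⟩
    obtain ⟨x₀, hx₀⟩ : ∃ x₀, IsLeast (firstCandidates D) x₀ :=
      ⟨sInf _, Set.Nonempty.csInf_mem ⟨_, hlast⟩ (Set.toFinite _), fun _ hx => csInf_le' hx⟩
    obtain ⟨π, hπ⟩ := exists_diagram_eq (hD.preimage_lift x₀)
    exact ⟨consPerm x₀ π, diagram_consPerm_of_isLeast hD hx₀ hπ⟩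

/-- The map `δ` is a bijection from the symmetric group `S_n` to the set of
noncrossing arc diagrams on `n` points. -/
theorem stmt8 (n : ℕ) :
    (∀ π : Equiv.Perm (Fin n), IsNCAD (diagram π)) ∧
    (∀ π σ : Equiv.Perm (Fin n), diagram π = diagram σ → π = σ) ∧
    (∀ D : Set (Arc n), IsNCAD D → ∃ π : Equiv.Perm (Fin n), diagram π = D) :=
  ⟨isNCAD_diagram, fun _ _ h => diagram_injective h, fun _ hD => exists_diagram_eq hD⟩
end

section
/- Under the bijection between join-irreducible signed permutations and type-B arcs, the simple reflections of B_n correspond exactly to: s_0 ↦ the orbifold arc with upper endpoint 1, and s_i ↦ the ordinary arc with endpoints i and i+1 (for 1 ≤ i ≤ n−1). Moreover, the superarcs of the arc for s_0 are precisely all orbifold arcs and all long arcs, and the superarcs of the arc for s_i (i ≥ 1) are precisely: ordinary arcs connecting a point ≤ i to a point > i, orbifold arcs with upper endpoint > i, and long arcs with at least one endpoint > i. -/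
/-- A type-B arc on the points `×, 1, …, n` of the orbifold model: ordinary,
orbifold, or long.  `R` records points to the right of the arc (for a long arc,
to the right of its right piece) and, for a long arc, `L` records the points to
the left of its left piece.  For a long arc, `p` is the left endpoint and `q`
the right endpoint. -/
inductive BArc (n : ℕ) where
  | ordinary (p q : ℕ) (R : Finset ℕ) : BArc n
  | orbifold (q : ℕ) (R : Finset ℕ) : BArc n
  | long (p q : ℕ) (L R : Finset ℕ) : BArc n

namespace BArc

/-- Well-formedness of the combinatorial data of a type-B arc. -/
def WF {n : ℕ} : BArc n → Prop
  | .ordinary p q R => 1 ≤ p ∧ p < q ∧ q ≤ n ∧ ∀ x ∈ R, p < x ∧ x < q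
  | .orbifold q R => 1 ≤ q ∧ q ≤ n ∧ ∀ x ∈ R, 0 < x ∧ x < q
  | .long p q L R => 1 ≤ p ∧ 1 ≤ q ∧ p ≤ n ∧ q ≤ n ∧ p ≠ q ∧
      (∀ x ∈ L, 0 < x ∧ x < p) ∧ (∀ x ∈ R, 0 < x ∧ x < q) ∧
      ∀ x : ℕ, ¬ (x ∈ L ∧ x ∈ R)

/-- The subarc relation on type-B arcs. -/
def Sub {n : ℕ} : BArc n → BArc n → Prop
  | .ordinary p' q' R', .ordinary p q R =>
      p ≤ p' ∧ p' < q' ∧ q' ≤ q ∧ R' = R.filter (fun x => p' < x ∧ x < q')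
  | .ordinary p' q' R', .orbifold q R =>
      p' < q' ∧ q' ≤ q ∧ R' = R.filter (fun x => p' < x ∧ x < q')
  | .ordinary p' q' R', .long p q L R =>
      p' < q' ∧
      ((q' ≤ p ∧ ∀ x : ℕ, p' < x → x < q' → (x ∈ L ↔ x ∉ R')) ∨
       (q' ≤ q ∧ R' = R.filter (fun x => p' < x ∧ x < q')))
  | .orbifold q' R', .orbifold q R =>
      q' ≤ q ∧ R' = R.filter (fun x => x < q')
  | .orbifold q' R', .long p q L R =>
      q' ≤ p ∧ q' ≤ q ∧ (∀ x : ℕ, 0 < x → x < q' → (x ∈ L ↔ x ∉ R')) ∧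
      R' = R.filter (fun x => x < q')
  | .long p' q' L' R', .long p q L R =>
      p' ≤ p ∧ q' ≤ q ∧ L' = L.filter (fun x => x < p') ∧
      R' = R.filter (fun x => x < q') ∧ p' ∉ R ∧ q' ∉ L
  | _, _ => False

end BArc

/-- The elements of a finite set of naturals, in increasing order, as integers. -/
def sortAsc (s : Finset ℕ) : List ℤ :=
  (s.sort (· ≤ ·)).map (fun x => (x : ℤ))

/-- The negatives of the elements of a finite set of naturals, in increasing
order (of the negatives). -/
def negAsc (s : Finset ℕ) : List ℤ :=
  ((s.sort (· ≤ ·)).map (fun x => -(x : ℤ))).reverse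

/-- The list `a, a+1, …, b` as integers. -/
def rangeList (a b : ℕ) : List ℤ :=
  (List.range' a (b + 1 - a)).map (fun x => (x : ℤ))

/-- The bijection between type-B arcs and join-irreducible signed permutations,
expressed by the explicit one-line notations: `corr α l` says that the
join-irreducible signed permutation with short one-line notation `l`
corresponds to the arc `α`. -/
def corr (n : ℕ) : BArc n → List ℤ → Prop
  | .orbifold q R, l =>
      l = -(q : ℤ) :: (negAsc ((Finset.Ioo 0 q) \ R) ++ sortAsc R ++ rangeList (q + 1) n)
  | .ordinary p q R, l =>
      l = rangeList 1 (p - 1) ++ sortAsc ((Finset.Ioo p q) \ R) ++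
            [(q : ℤ), (p : ℤ)] ++ sortAsc R ++ rangeList (q + 1) n
  | .long p q L R, l =>
      (p < q ∧ l = sortAsc (((Finset.Ioo 0 (min p q)) \ L) \ R) ++
          sortAsc ((Finset.Ioo p q) \ R) ++ [(q : ℤ), -(p : ℤ)] ++
          negAsc L ++ sortAsc R ++ rangeList (q + 1) n) ∨
      (q < p ∧ l = sortAsc (((Finset.Ioo 0 (min p q)) \ L) \ R) ++
          [(q : ℤ), -(p : ℤ)] ++ negAsc L ++ sortAsc R ++
          sortAsc ((Finset.Ioo q p) \ L) ++ rangeList (p + 1) n)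

/-- Under the bijection between join-irreducible signed permutations and type-B
arcs: `s₀ = (−1)2⋯n` corresponds to the orbifold arc with upper endpoint `1`,
and `s_i = 1⋯(i−1)(i+1)i(i+2)⋯n` corresponds to the ordinary arc with endpoints
`i` and `i+1`.  Moreover, the superarcs of the arc of `s₀` are exactly the
orbifold and long arcs, and the superarcs of the arc of `s_i` are exactly the
ordinary arcs joining a point `≤ i` to a point `> i`, the orbifold arcs with
upper endpoint `> i`, and the long arcs with at least one endpoint `> i`. -/
theorem stmt16 (n : ℕ) (hn : 2 ≤ n) :
    corr n (BArc.orbifold 1 ∅) ((-1 : ℤ) :: rangeList 2 n) ∧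
    (∀ i : ℕ, 1 ≤ i → i + 1 ≤ n →
      corr n (BArc.ordinary i (i + 1) ∅)
        (rangeList 1 (i - 1) ++ [((i : ℤ) + 1), (i : ℤ)] ++ rangeList (i + 2) n)) ∧
    (∀ α : BArc n, α.WF →
      (BArc.Sub (BArc.orbifold 1 ∅) α ↔
        ((∃ q R, α = BArc.orbifold q R) ∨ ∃ p q L R, α = BArc.long p q L R))) ∧
    (∀ i : ℕ, 1 ≤ i → i + 1 ≤ n → ∀ α : BArc n, α.WF →
      (BArc.Sub (BArc.ordinary i (i + 1) ∅) α ↔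
        match α with
        | .ordinary p q _ => p ≤ i ∧ i < q
        | .orbifold q _ => i < q
        | .long p q _ _ => i < p ∨ i < q)) := by
  
  have hIoo : ∀ i : ℕ, Finset.Ioo i (i+1) = (∅ : Finset ℕ) := by
    intro i; ext x; simp
  refine ⟨?_, ?_, ?_, ?_⟩
  · simp [corr, sortAsc, negAsc, hIoo 0]
  · intro i h1 h2
    simp [corr, sortAsc, hIoo i]


  · rintro (⟨p, q, R⟩ | ⟨q, R⟩ | ⟨p, q, L, R⟩) hwf
    · simp only [BArc.Sub]
      constructor
      · intro h; exact h.elim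
      · rintro (⟨_, _, h⟩ | ⟨_, _, _, _, h⟩) <;> exact absurd h (by simp)
    · obtain ⟨h1, h2, h3⟩ := hwf
      simp only [BArc.Sub]
      constructor
      · intro _; exact Or.inl ⟨q, R, rfl⟩
      · intro _
        refine ⟨h1, ?_⟩
        symm; rw [Finset.filter_eq_empty_iff]
        intro x hx; have := h3 x hx; omega
    · obtain ⟨h1, h2, h3, h4, h5, h6, h7, h8⟩ := hwf
      simp only [BArc.Sub]
      constructor
      · intro _; exact Or.inr ⟨p, q, L, R, rfl⟩
      · intro _
        refine ⟨h1, h2, fun x hx hx' => absurd hx' (by omega), ?_⟩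
        symm; rw [Finset.filter_eq_empty_iff]
        intro x hx; have := h7 x hx; omega
  · intro i hi1 hi2
    rintro (⟨p, q, R⟩ | ⟨q, R⟩ | ⟨p, q, L, R⟩) hwf
    · simp only [BArc.Sub]
      constructor
      · rintro ⟨ha, _, hb, _⟩; exact ⟨ha, by omega⟩
      · rintro ⟨ha, hb⟩
        refine ⟨ha, by omega, by omega, ?_⟩
        symm; rw [Finset.filter_eq_empty_iff]
        intro x _; omega
    · simp only [BArc.Sub]
      constructor
      · rintro ⟨_, hb, _⟩; omega
      · intro h
        refine ⟨by omega, by omega, ?_⟩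
        symm; rw [Finset.filter_eq_empty_iff]
        intro x _; omega
    · simp only [BArc.Sub]
      constructor
      · rintro ⟨_, (⟨ha, _⟩ | ⟨ha, _⟩)⟩
        · exact Or.inl (by omega)
        · exact Or.inr (by omega)
      · rintro (h | h)
        · refine ⟨by omega, Or.inl ⟨by omega, fun x hx hx' => absurd hx' (by omega)⟩⟩
        · refine ⟨by omega, Or.inr ⟨by omega, ?_⟩⟩
          symm; rw [Finset.filter_eq_empty_iff]
          intro x _; omega
end
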